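/- arXiv:0704.2919 — 2 statements merged into one kernel-verified Lean document; each statement's English description precedes it below -/
import Mathlib

section
/- A family B of finite sets containing the empty set is the base of a ∪-closed well-graded family if and only if every nonempty X ∈ B has exactly one endpoint. -/
open Finset

variable {α : Type*} [DecidableEq α]

/-- The span of a family `G`: all unions of nonempty subfamilies of `G`. -/
def Span (G : Finset (Finset α)) : Finset (Finset α) :=
  (G.powerset.filter Finset.Nonempty).image fun H => H.sup id

/-- A family is ∪-closed if it contains the union of each of its nonempty subfamilies. -/
def UnionClosed (F : Finset (Finset α)) : Prop :=
  ∀ H ⊆ F, H.Nonempty → H.sup id ∈ F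

/-- `p` is a tight path from `P` to `Q` inside the family `F`. -/
def IsTightPath (F : Finset (Finset α)) (P Q : Finset α) (p : List (Finset α)) : Prop :=
  p.head? = some P ∧ p.getLast? = some Q ∧
  p.length = (symmDiff P Q).card + 1 ∧
  (∀ S ∈ p, S ∈ F) ∧
  List.Chain' (fun A B => (symmDiff A B).card = 1) p

/-- A family is well-graded if any two distinct members are joined by a tight path. -/
def WellGraded (F : Finset (Finset α)) : Prop :=
  ∀ P ∈ F, ∀ Q ∈ F, P ≠ Q → ∃ p, IsTightPath F P Q p

/-- `B` is a base of `F`: a minimal subfamily of `F` spanning `F`. -/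
def IsBase (B F : Finset (Finset α)) : Prop :=
  B ⊆ F ∧ Span B = F ∧ ∀ H ⊆ B, Span H = F → H = B

/-- `A` is an atom of `F` at `x`: an inclusion-minimal member of `F` containing `x`. -/
def IsAtomAt (F : Finset (Finset α)) (x : α) (A : Finset α) : Prop :=
  A ∈ F ∧ x ∈ A ∧ ∀ B ∈ F, x ∈ B → B ⊆ A → B = A

/-- `A` is an atom of `F`: either the empty set (if it is in `F`) or an atom at some point. -/
def IsAtomOf (F : Finset (Finset α)) (A : Finset α) : Prop :=
  (A = ∅ ∧ A ∈ F) ∨ ∃ x, IsAtomAt F x A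

/-- The surmise function: the collection of atoms of `F` at `x`. -/
def surmise (F : Finset (Finset α)) (x : α) : Finset (Finset α) :=
  F.filter fun A => x ∈ A ∧ ∀ B ∈ F, x ∈ B → B ⊆ A → B = A

/-- `{σ(x) : x ∈ ∪F}` forms a partition of `B \ {∅}`. -/
def SurmisePartition (F B : Finset (Finset α)) : Prop :=
  (∀ x ∈ F.sup id, ∀ y ∈ F.sup id,
      surmise F x = surmise F y ∨ Disjoint (surmise F x) (surmise F y)) ∧
  (F.sup id).sup (surmise F) = B.erase ∅

/-- The endpoints of `X` in the family `B`: elements of `X` lying in no proper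
subset of `X` belonging to `B`. -/
def endpoints (B : Finset (Finset α)) (X : Finset α) : Finset α :=
  X \ (B.filter fun Y => Y ⊂ X).sup id

/-- A family is discriminative if points contained in the same members are equal. -/
def Discriminative (F : Finset (Finset α)) : Prop :=
  ∀ u ∈ F.sup id, ∀ v ∈ F.sup id, (∀ S ∈ F, (u ∈ S ↔ v ∈ S)) → u = v

/-!
Write `U(X) = lowerUnion B X` for the union of the members of `B` strictly inside `X`, so that
the endpoints of `X` are `X \ U(X)`. Minimality of a base says exactly that `U(X) ≠ X` for
nonempty `X ∈ B`. A tight path from `U(X)` to `X` starts with some `U(X) ∪ {b}`, `b ∈ X`; every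
spanned set strictly inside `X` lies in `U(X)`, so this first step is already `X`, and `b` is its
only endpoint. Conversely, if every nonempty member has one endpoint, any spanned `A` can be
enlarged by a single point of any spanned `C ⊄ A`: descend inside `C` through members of `B` not
contained in `A` until all points of the member missing from `A` are endpoints, i.e. there is just
one. Such steps build tight paths between any two spanned sets.
-/

open scoped symmDiff

section Toggle

variable {c : α} {P D : Finset α}

theorem insert_eq_singleton_symmDiff (h : c ∉ P) : insert c P = {c} ∆ P := by
  rw [(disjoint_singleton_left.2 h).symmDiff_eq_sup]
  rfl

theorem card_singleton_symmDiff_of_notMem (h : c ∉ D) : #({c} ∆ D) = #D + 1 := by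
  rw [← insert_eq_singleton_symmDiff h, card_insert_of_notMem h]

theorem card_singleton_symmDiff_add_one (h : c ∈ D) : #({c} ∆ D) + 1 = #D := by
  rw [symmDiff_of_le (singleton_subset_iff.2 h), ← card_singleton c]
  exact card_sdiff_add_card_eq_card (singleton_subset_iff.2 h)

end Toggle

section TightPath

variable {F : Finset (Finset α)} {P P' Q : Finset α} {p : List (Finset α)}

theorem isTightPath_iff : IsTightPath F P Q p ↔ p.head? = some P ∧ p.getLast? = some Q ∧
    p.length = #(P ∆ Q) + 1 ∧ (∀ S ∈ p, S ∈ F) ∧ p.IsChain fun A B => #(A ∆ B) = 1 :=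
  Iff.rfl

theorem card_symmDiff_le_length_of_isChain {A C : Finset α} {l : List (Finset α)}
    (hl : (A :: l).IsChain fun X Y => #(X ∆ Y) = 1) (hC : (A :: l).getLast? = some C) :
    #(A ∆ C) ≤ l.length := by
  induction l generalizing A with
  | nil => simp_all
  | cons B l ih =>
    rw [List.isChain_cons_cons] at hl
    rw [List.getLast?_cons_cons] at hC
    calc #(A ∆ C) ≤ #(A ∆ B ∪ B ∆ C) := card_le_card (symmDiff_triangle A B C)
      _ ≤ #(A ∆ B) + #(B ∆ C) := card_union_le _ _
      _ ≤ (B :: l).length := by rw [hl.1, List.length_cons]; linarith [ih hl.2 hC]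

theorem isTightPath_singleton (hP : P ∈ F) : IsTightPath F P P [P] := by
  simp [isTightPath_iff, hP]

theorem IsTightPath.reverse (hp : IsTightPath F P Q p) : IsTightPath F Q P p.reverse := by
  obtain ⟨hP, hQ, hlen, hmem, hchain⟩ := isTightPath_iff.1 hp
  refine isTightPath_iff.2 ⟨by rwa [List.head?_reverse], by rwa [List.getLast?_reverse],
    by rw [List.length_reverse, hlen, symmDiff_comm], fun S hS => hmem S (List.mem_reverse.1 hS),
    List.isChain_reverse.2 ?_⟩
  simpa only [symmDiff_comm] using hchain

theorem IsTightPath.cons (hP : P ∈ F) (hstep : #(P ∆ P') = 1) (hlen : #(P' ∆ Q) + 1 = #(P ∆ Q))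
    (hp : IsTightPath F P' Q p) : IsTightPath F P Q (P :: p) := by
  obtain ⟨hP', hQ, hlen', hmem, hchain⟩ := isTightPath_iff.1 hp
  obtain ⟨t, rfl⟩ := List.head?_eq_some_iff.1 hP'
  refine isTightPath_iff.2 ⟨rfl, by rwa [List.getLast?_cons_cons], by simp_all, ?_, ?_⟩
  · simpa [hP] using hmem
  · exact List.isChain_cons_cons.2 ⟨hstep, hchain⟩

theorem IsTightPath.exists_singleton_symmDiff_mem (hp : IsTightPath F P Q p) (hPQ : P ≠ Q) :
    ∃ c ∈ P ∆ Q, {c} ∆ P ∈ F := by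
  obtain ⟨hP, hQ, hlen, hmem, hchain⟩ := isTightPath_iff.1 hp
  obtain ⟨t, rfl⟩ := List.head?_eq_some_iff.1 hP
  cases t with
  | nil => simp_all
  | cons S t =>
    rw [List.isChain_cons_cons] at hchain
    obtain ⟨c, hc⟩ := card_eq_one.1 hchain.1
    have hS : S = {c} ∆ P := by
      rw [← hc, symmDiff_comm P S, symmDiff_symmDiff_cancel_right]
    refine ⟨c, ?_, hS ▸ hmem S (by simp)⟩
    by_contra hc'
    have hbound := card_symmDiff_le_length_of_isChain hchain.2
      (by rwa [List.getLast?_cons_cons] at hQ)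
    rw [hS, symmDiff_assoc, card_singleton_symmDiff_of_notMem hc'] at hbound
    simp only [List.length_cons] at hlen
    omega

theorem WellGraded.exists_insert_mem {U X : Finset α} (hF : WellGraded F) (hU : U ∈ F)
    (hX : X ∈ F) (hUX : U ⊂ X) : ∃ b ∈ X \ U, insert b U ∈ F := by
  obtain ⟨p, hp⟩ := hF U hU X hX hUX.ne
  obtain ⟨b, hb, hbF⟩ := hp.exists_singleton_symmDiff_mem hUX.ne
  rw [symmDiff_of_le hUX.subset] at hb
  exact ⟨b, hb, by rwa [insert_eq_singleton_symmDiff (mem_sdiff.1 hb).2]⟩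

theorem wellGraded_of_exists_insert
    (hF : ∀ P ∈ F, ∀ Q ∈ F, ¬Q ⊆ P → ∃ b ∈ Q \ P, insert b P ∈ F) : WellGraded F := by
  suffices h : ∀ n, ∀ P ∈ F, ∀ Q ∈ F, #(P ∆ Q) = n → ∃ p, IsTightPath F P Q p from
    fun P hP Q hQ _ => h _ P hP Q hQ rfl
  intro n
  induction n with
  | zero =>
    intro P hP Q _ hPQ
    obtain rfl : P = Q := symmDiff_eq_bot.1 (card_eq_zero.1 hPQ)
    exact ⟨[P], isTightPath_singleton hP⟩
  | succ n ih =>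
    have up : ∀ P ∈ F, ∀ Q ∈ F, #(P ∆ Q) = n + 1 → ¬Q ⊆ P → ∃ p, IsTightPath F P Q p := by
      intro P hP Q hQ hPQ hQP
      obtain ⟨b, hb, hbF⟩ := hF P hP Q hQ hQP
      have hbP := (mem_sdiff.1 hb).2
      rw [insert_eq_singleton_symmDiff hbP] at hbF
      have hlen : #(({b} ∆ P) ∆ Q) + 1 = #(P ∆ Q) := by
        rw [symmDiff_assoc]
        exact card_singleton_symmDiff_add_one (mem_symmDiff.2 (Or.inr (mem_sdiff.1 hb)))
      obtain ⟨p, hp⟩ := ih _ hbF Q hQ (by omega)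
      refine ⟨P :: p, hp.cons hP ?_ hlen⟩
      rw [symmDiff_comm {b} P, symmDiff_symmDiff_cancel_left, card_singleton]
    intro P hP Q hQ hPQ
    by_cases hQP : Q ⊆ P
    · have hPQ' : ¬P ⊆ Q := fun h => by
        rw [h.antisymm hQP, symmDiff_self] at hPQ
        simp at hPQ
      obtain ⟨p, hp⟩ := up Q hQ P hP (by rwa [symmDiff_comm]) hPQ'
      exact ⟨p.reverse, hp.reverse⟩
    · exact up P hP Q hQ hPQ hQP

end TightPath

section Span

variable {B H : Finset (Finset α)} {S : Finset α}

theorem mem_span : S ∈ Span B ↔ ∃ H ⊆ B, H.Nonempty ∧ H.sup id = S := by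
  simp only [Span, mem_image, mem_filter, mem_powerset, and_assoc]

theorem subset_span : B ⊆ Span B :=
  fun X hX => mem_span.2 ⟨{X}, singleton_subset_iff.2 hX, singleton_nonempty X, sup_singleton⟩

theorem span_mono (h : H ⊆ B) : Span H ⊆ Span B := fun _ hS => by
  obtain ⟨G, hG, hne, hsup⟩ := mem_span.1 hS
  exact mem_span.2 ⟨G, hG.trans h, hne, hsup⟩

theorem unionClosed_span : UnionClosed (Span B) := by
  have hsup : SupClosed (Span B : Set (Finset α)) := fun S hS T hT => by
    obtain ⟨G, hG, hGne, rfl⟩ := mem_span.1 hS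
    obtain ⟨K, hK, -, rfl⟩ := mem_span.1 hT
    exact mem_span.2 ⟨G ∪ K, union_subset hG hK, hGne.mono subset_union_left, sup_union⟩
  exact fun H hH hne => hsup.finsetSup_mem hne hH

theorem span_eq_of_subset_span (hHB : H ⊆ B) (hBH : B ⊆ Span H) : Span H = Span B :=
  (span_mono hHB).antisymm fun S hS => by
    obtain ⟨G, hGB, hG, rfl⟩ := mem_span.1 hS
    exact unionClosed_span G (hGB.trans hBH) hG

theorem exists_mem_subset_of_mem_span {x : α} (hS : S ∈ Span B) (hx : x ∈ S) :
    ∃ Z ∈ B, Z ⊆ S ∧ x ∈ Z := by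
  obtain ⟨H, hHB, -, rfl⟩ := mem_span.1 hS
  obtain ⟨Z, hZ, hxZ⟩ := mem_sup.1 hx
  exact ⟨Z, hHB hZ, le_sup (f := id) hZ, hxZ⟩

theorem empty_mem_span_iff : ∅ ∈ Span B ↔ ∅ ∈ B := by
  refine ⟨fun h => ?_, fun h => subset_span h⟩
  obtain ⟨H, hHB, ⟨Z, hZ⟩, hH⟩ := mem_span.1 h
  rw [← subset_empty.1 (hH ▸ le_sup (f := id) hZ)]
  exact hHB hZ

theorem sup_mem_span (hempty : ∅ ∈ B) (hH : H ⊆ B) : H.sup id ∈ Span B :=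
  mem_span.2 ⟨insert ∅ H, insert_subset hempty hH, insert_nonempty _ _, by simp⟩

end Span

section LowerUnion

variable {B F : Finset (Finset α)} {S X : Finset α}

def lowerUnion (B : Finset (Finset α)) (X : Finset α) : Finset α :=
  (B.filter fun Y => Y ⊂ X).sup id

theorem endpoints_eq_sdiff_lowerUnion : endpoints B X = X \ lowerUnion B X := rfl

theorem lowerUnion_subset : lowerUnion B X ⊆ X :=
  Finset.sup_le fun _ hY => (mem_filter.1 hY).2.subset

theorem lowerUnion_mem_span (hempty : ∅ ∈ B) : lowerUnion B X ∈ Span B :=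
  sup_mem_span hempty (filter_subset _ _)

theorem subset_lowerUnion_of_mem_span (hS : S ∈ Span B) (hSX : S ⊂ X) :
    S ⊆ lowerUnion B X := fun x hx => by
  obtain ⟨Z, hZB, hZS, hxZ⟩ := exists_mem_subset_of_mem_span hS hx
  have hZX : Z ∈ B.filter fun Y => Y ⊂ X := mem_filter.2 ⟨hZB, hZS.trans_ssubset hSX⟩
  exact le_sup (f := id) hZX hxZ

theorem mem_span_erase_iff : X ∈ Span (B.erase X) ↔ X ≠ ∅ ∧ lowerUnion B X = X := by
  constructor
  · intro h
    refine ⟨by rintro rfl; exact notMem_erase _ _ (empty_mem_span_iff.1 h),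
      lowerUnion_subset.antisymm fun x hx => ?_⟩
    obtain ⟨Z, hZ, hZX, hxZ⟩ := exists_mem_subset_of_mem_span h hx
    obtain ⟨hZne, hZB⟩ := mem_erase.1 hZ
    exact subset_lowerUnion_of_mem_span (subset_span hZB) (hZX.ssubset_of_ne hZne) hxZ
  · rintro ⟨hX0, hU⟩
    refine mem_span.2 ⟨B.filter fun Y => Y ⊂ X,
      fun Y hY => mem_erase.2 ⟨(mem_filter.1 hY).2.ne, (mem_filter.1 hY).1⟩, ?_, hU⟩
    rw [nonempty_iff_ne_empty]
    intro h
    rw [lowerUnion, h, sup_empty] at hU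
    exact hX0 hU.symm

theorem span_erase_eq (hX : X ∈ Span (B.erase X)) : Span (B.erase X) = Span B :=
  span_eq_of_subset_span (erase_subset _ _) fun Y hY => by
    by_cases h : Y = X
    · rwa [h]
    · exact subset_span (mem_erase.2 ⟨h, hY⟩)

theorem IsBase.lowerUnion_ssubset (hB : IsBase B F) (hX : X ∈ B) (hX0 : X ≠ ∅) :
    lowerUnion B X ⊂ X := by
  refine lowerUnion_subset.ssubset_of_ne fun hU => ?_
  obtain ⟨-, rfl, hmin⟩ := hB
  have := hmin _ (erase_subset X B) (span_erase_eq (mem_span_erase_iff.2 ⟨hX0, hU⟩))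
  exact erase_eq_self.1 this hX

theorem IsBase.card_endpoints_eq_one (hB : IsBase B F) (hF : WellGraded F) (hempty : ∅ ∈ B)
    (hX : X ∈ B) (hX0 : X ≠ ∅) : #(endpoints B X) = 1 := by
  have hU := hB.lowerUnion_ssubset hX hX0
  obtain ⟨hBF, rfl, -⟩ := hB
  obtain ⟨b, hb, hbF⟩ := hF.exists_insert_mem (lowerUnion_mem_span hempty) (hBF hX) hU
  obtain ⟨hbX, hbU⟩ := mem_sdiff.1 hb
  have hXeq : insert b (lowerUnion B X) = X := by
    by_contra hne
    exact hbU (subset_lowerUnion_of_mem_span hbF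
      ((insert_subset hbX hU.subset).ssubset_of_ne hne) (mem_insert_self _ _))
  rw [endpoints_eq_sdiff_lowerUnion]
  nth_rw 1 [← hXeq]
  rw [insert_sdiff_cancel hbU, card_singleton]

end LowerUnion

section OneEndpoint

variable {B : Finset (Finset α)} {A C : Finset α}
  (hB : ∀ X ∈ B, X ≠ ∅ → #(endpoints B X) = 1)
include hB

theorem exists_insert_mem_span_of_mem (hA : A ∈ Span B) :
    ∀ Y ∈ B, ¬Y ⊆ A → ∃ b ∈ Y \ A, insert b A ∈ Span B := by
  intro Y
  induction Y using Finset.strongInduction with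
  | H Y ih =>
  intro hY hYA
  by_cases hlow : ∃ Z ∈ B, Z ⊂ Y ∧ ¬Z ⊆ A
  · obtain ⟨Z, hZ, hZY, hZA⟩ := hlow
    obtain ⟨b, hb, hbA⟩ := ih Z hZY hZ hZA
    exact ⟨b, sdiff_subset_sdiff hZY.subset le_rfl hb, hbA⟩
  · push Not at hlow
    have hsub : Y \ A ⊆ endpoints B Y :=
      sdiff_subset_sdiff le_rfl (Finset.sup_le fun Z hZ => hlow Z (mem_filter.1 hZ).1
        (mem_filter.1 hZ).2)
    obtain ⟨e, he⟩ := card_eq_one.1 (hB Y hY (by rintro rfl; exact hYA (empty_subset A)))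
    have hYe : Y \ A = {e} :=
      (subset_singleton_iff.1 (he ▸ hsub)).resolve_left (sdiff_nonempty.2 hYA).ne_empty
    refine ⟨e, hYe ▸ mem_singleton_self e, ?_⟩
    rw [insert_eq, ← hYe, union_comm, union_sdiff_self_eq_union]
    simpa using unionClosed_span {A, Y}
      (insert_subset hA (singleton_subset_iff.2 (subset_span hY))) (insert_nonempty _ _)

theorem exists_insert_mem_span (hA : A ∈ Span B) (hC : C ∈ Span B) (hCA : ¬C ⊆ A) :
    ∃ b ∈ C \ A, insert b A ∈ Span B := by
  obtain ⟨x, hxC, hxA⟩ := not_subset.1 hCA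
  obtain ⟨Y, hY, hYC, hxY⟩ := exists_mem_subset_of_mem_span hC hxC
  obtain ⟨b, hb, hbA⟩ := exists_insert_mem_span_of_mem hB hA Y hY fun h => hxA (h hxY)
  exact ⟨b, sdiff_subset_sdiff hYC le_rfl hb, hbA⟩

theorem wellGraded_span : WellGraded (Span B) :=
  wellGraded_of_exists_insert fun _ hP _ hQ hQP => exists_insert_mem_span hB hP hQ hQP

theorem isBase_span : IsBase B (Span B) := by
  refine ⟨subset_span, rfl, fun H hHB hH => hHB.antisymm fun X hX => ?_⟩
  by_contra hXH
  have hHX : H ⊆ B.erase X := fun Y hY => mem_erase.2 ⟨fun h => hXH (h ▸ hY), hHB hY⟩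
  obtain ⟨hX0, hU⟩ := mem_span_erase_iff.1 (span_mono hHX (hH ▸ subset_span hX))
  have hcard := hB X hX hX0
  rw [endpoints_eq_sdiff_lowerUnion, hU, sdiff_self] at hcard
  exact zero_ne_one hcard

end OneEndpoint

/-- A family containing `∅` is the base of a ∪-closed well-graded family iff every
nonempty member has exactly one endpoint. -/
theorem base_of_wg_iff_one_endpoint (B : Finset (Finset α))
    (hempty : (∅ : Finset α) ∈ B) :
    (∃ F : Finset (Finset α), UnionClosed F ∧ WellGraded F ∧ IsBase B F) ↔
      ∀ X ∈ B, X ≠ ∅ → (endpoints B X).card = 1 := by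
  constructor
  · rintro ⟨F, -, hF, hB⟩ X hX hX0
    exact hB.card_endpoints_eq_one hF hempty hX hX0
  · intro hB
    exact ⟨Span B, unionClosed_span, wellGraded_span hB, isBase_span hB⟩
end

section
/- If F is a ∪-closed well-graded family and X, Y ∈ F are distinct, then there exists a tight path from X to X ∪ Y in F consisting of an increasing chain: a sequence X = X_1 ⊊ X_2 ⊊ ... ⊊ X_n = X ∪ Y in F with |X_{i+1} \ X_i| = 1 for each i. -/
open Finset

variable {α : Type*} [DecidableEq α]

/-! Well-gradedness gives a tight path from `X` to `X ∪ Y`, which lies in `F` by ∪-closure. A tight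
path to a superset `B` of its start is increasing: every step must bring it one step closer to `B`,
and a one-point change of `A ⊆ B` that gets closer to `B` can only add a point of `B \ A`. -/

open scoped symmDiff

lemma card_symmDiff_le_add (A B C : Finset α) : #(A ∆ C) ≤ #(A ∆ B) + #(B ∆ C) :=
  (card_le_card (symmDiff_triangle A B C)).trans (card_union_le _ _)

lemma UnionClosed.union_mem {F : Finset (Finset α)} (hF : UnionClosed F) {X Y : Finset α}
    (hX : X ∈ F) (hY : Y ∈ F) : X ∪ Y ∈ F := by
  simpa using hF {X, Y} (insert_subset hX (singleton_subset_iff.2 hY)) (insert_nonempty X {Y})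

lemma WellGraded.exists_isTightPath {F : Finset (Finset α)} (hF : WellGraded F) {P Q : Finset α}
    (hP : P ∈ F) (hQ : Q ∈ F) : ∃ p, IsTightPath F P Q p := by
  obtain rfl | hPQ := eq_or_ne P Q
  · exact ⟨[P], rfl, rfl, by simp, by simpa using hP, List.isChain_singleton P⟩
  · exact hF P hP Q hQ hPQ

lemma card_symmDiff_lt_length {A B : Finset α} :
    ∀ {p : List (Finset α)}, p.IsChain (fun S T => #(S ∆ T) = 1) →
      p.head? = some A → p.getLast? = some B → #(A ∆ B) < p.length
  | [], _, hA, _ => by simp at hA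
  | [C], _, hA, hB => by
    obtain rfl : C = A := by simpa using hA
    obtain rfl : C = B := by simpa using hB
    simp
  | C :: D :: rest, hp, hA, hB => by
    obtain rfl : C = A := by simpa using hA
    obtain ⟨hCD, hp⟩ := List.isChain_cons_cons.1 hp
    have hDB := card_symmDiff_lt_length hp rfl (by rwa [List.getLast?_cons_cons] at hB)
    have hCDB := card_symmDiff_le_add C D B
    simp only [List.length_cons] at hDB ⊢
    omega

lemma exists_eq_insert_of_card_symmDiff_lt {A B C : Finset α} (hAB : A ⊆ B)
    (hAC : #(A ∆ C) = 1) (hCB : #(C ∆ B) < #(A ∆ B)) : ∃ a ∈ B \ A, C = insert a A := by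
  obtain ⟨a, ha⟩ := card_eq_one.1 hAC
  have hC : C = A ∆ {a} := by rw [← ha, symmDiff_symmDiff_cancel_left]
  have hCB' : C ∆ B = (A ∆ B) ∆ {a} := by rw [hC, symmDiff_right_comm]
  have haAB : a ∈ A ∆ B := by
    by_contra h
    rw [hCB', symmDiff_eq_union (disjoint_singleton_right.2 h), card_union_of_disjoint
      (disjoint_singleton_right.2 h), card_singleton] at hCB
    omega
  rw [symmDiff_of_le hAB] at haAB
  refine ⟨a, haAB, ?_⟩
  rw [hC, symmDiff_eq_union (disjoint_singleton_right.2 (mem_sdiff.1 haAB).2), union_comm,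
    ← insert_eq]

lemma IsTightPath.isChain_ssubset_of_subset {F : Finset (Finset α)} {A B : Finset α}
    (hAB : A ⊆ B) : ∀ {p : List (Finset α)}, IsTightPath F A B p →
      p.IsChain (fun S T => S ⊂ T ∧ #(T \ S) = 1)
  | [], ⟨hA, _⟩ => by simp at hA
  | [_], _ => List.isChain_singleton _
  | C :: D :: rest, ⟨hA, hB, hlen, hF, hp⟩ => by
    obtain rfl : C = A := by simpa using hA
    obtain ⟨hCD, hp⟩ := List.isChain_cons_cons.1 hp
    have hB' : (D :: rest).getLast? = some B := by rwa [List.getLast?_cons_cons] at hB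
    have hDB := card_symmDiff_lt_length hp rfl hB'
    simp only [List.length_cons] at hlen hDB
    obtain ⟨a, ha, rfl⟩ := exists_eq_insert_of_card_symmDiff_lt hAB hCD (by omega)
    have haC := (mem_sdiff.1 ha).2
    have hCDB := card_symmDiff_le_add C (insert a C) B
    have htail : IsTightPath F (insert a C) B (insert a C :: rest) :=
      ⟨rfl, hB', by simp only [List.length_cons]; omega,
        fun S hS => hF S (List.mem_cons_of_mem C hS), hp⟩
    rw [List.isChain_cons_cons]
    exact ⟨⟨ssubset_insert haC, by rw [insert_sdiff_cancel haC, card_singleton]⟩,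
      htail.isChain_ssubset_of_subset (insert_subset (mem_sdiff.1 ha).1 hAB)⟩

theorem exists_increasing_tight_path_general (F : Finset (Finset α)) (hF : UnionClosed F)
    (hwg : WellGraded F) (X Y : Finset α) (hX : X ∈ F) (hY : Y ∈ F) :
    ∃ p : List (Finset α), IsTightPath F X (X ∪ Y) p ∧
      List.Chain' (fun A B => A ⊂ B ∧ (B \ A).card = 1) p := by
  obtain ⟨p, hp⟩ := hwg.exists_isTightPath hX (hF.union_mem hX hY)
  exact ⟨p, hp, hp.isChain_ssubset_of_subset subset_union_left⟩

/-- In a ∪-closed well-graded family, any `X ≠ Y` admit a tight path from `X` to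
`X ∪ Y` which is a strictly increasing chain with one-element steps. -/
theorem exists_increasing_tight_path (F : Finset (Finset α)) (hF : UnionClosed F)
    (hwg : WellGraded F) (X Y : Finset α) (hX : X ∈ F) (hY : Y ∈ F) (hne : X ≠ Y) :
    ∃ p : List (Finset α), IsTightPath F X (X ∪ Y) p ∧
      List.Chain' (fun A B => A ⊂ B ∧ (B \ A).card = 1) p :=
  exists_increasing_tight_path_general F hF hwg X Y hX hY
end
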